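/- Under the SGD setup, suppose in addition that ∑_{m=1}^∞ α_m = ∞, ∑_{m=1}^∞ α_m² < ∞, 0 ≤ α_m ≤ 1/L, and E[f(w_1)] < ∞. Then the sequence E[f(w_m)] converges as m → ∞ (to its liminf); in particular E[f(w_m)] is a Cauchy sequence. -/

import Mathlib

open Filter MeasureTheory ProbabilityTheory RealInnerProductSpace

section Aux
variable {E : Type*} [NormedAddCommGroup E] [InnerProductSpace ℝ E] [CompleteSpace E]

lemma sgd_grad_lip (f : E → ℝ) (L : ℝ) (hf : ContDiff ℝ 2 f)
    (hHess : ∀ x, ‖fderiv ℝ (gradient f) x‖ ≤ L) :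
    LipschitzWith L.toNNReal (gradient f) := by
  have hd1 : Differentiable ℝ (fderiv ℝ f) :=
    (hf.fderiv_right (m := 1) (by norm_num)).differentiable (by norm_num)
  have hdg : Differentiable ℝ (gradient f) := by
    have : gradient f = fun x => (InnerProductSpace.toDual ℝ E).symm (fderiv ℝ f x) := rfl
    rw [this]
    exact (InnerProductSpace.toDual ℝ E).symm.toContinuousLinearEquiv.differentiable.comp hd1
  exact lipschitzWith_of_nnnorm_fderiv_le hdg fun x => by
    rw [← norm_toNNReal]
    exact Real.toNNReal_mono (hHess x)

lemma sgd_hasDeriv (f : E → ℝ) (hf : ContDiff ℝ 2 f) (x v : E) (t : ℝ) :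
    HasDerivAt (fun s : ℝ => f (x + s • v)) ⟪gradient f (x + t • v), v⟫ t := by
  have hdf : DifferentiableAt ℝ f (x + t • v) :=
    (hf.differentiable (by norm_num)).differentiableAt
  have h1 : HasFDerivAt f (fderiv ℝ f (x + t • v)) (x + t • v) := hdf.hasFDerivAt
  have h2 : HasDerivAt (fun s : ℝ => x + s • v) v t := by
    simpa using ((hasDerivAt_id t).smul_const v).const_add x
  have h3 := h1.comp_hasDerivAt t h2
  convert h3 using 1
  · rfl
  · rfl
  · rfl
  have : fderiv ℝ f (x + t • v) = InnerProductSpace.toDual ℝ E (gradient f (x + t • v)) := by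
    simp [gradient]
  rw [this]
  simp [InnerProductSpace.toDual_apply_apply]

lemma sgd_descent (f : E → ℝ) (L : ℝ) (hL : 0 ≤ L) (hf : ContDiff ℝ 2 f)
    (hHess : ∀ x, ‖fderiv ℝ (gradient f) x‖ ≤ L) (x y : E) :
    f y ≤ f x + ⟪gradient f x, y - x⟫ + L / 2 * ‖y - x‖ ^ 2 := by
  have hlip := sgd_grad_lip f L hf hHess
  set v := y - x with hv
  have hcontg : Continuous (gradient f) := hlip.continuous
  have hφ' : Continuous fun t : ℝ => ⟪gradient f (x + t • v), v⟫ := by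
    exact (hcontg.comp (by continuity)).inner continuous_const
  have hftc : ∫ t in (0:ℝ)..1, ⟪gradient f (x + t • v), v⟫ = f y - f x := by
    have := intervalIntegral.integral_eq_sub_of_hasDerivAt
      (f := fun s : ℝ => f (x + s • v)) (f' := fun t => ⟪gradient f (x + t • v), v⟫)
      (a := (0:ℝ)) (b := 1)
      (fun t _ => sgd_hasDeriv f hf x v t) (hφ'.intervalIntegrable 0 1)
    simpa [hv] using this
  have hbound : ∀ t ∈ Set.Icc (0:ℝ) 1,
      ⟪gradient f (x + t • v), v⟫ ≤ ⟪gradient f x, v⟫ + L * t * ‖v‖ ^ 2 := by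
    intro t ht
    have h1 : ⟪gradient f (x + t • v) - gradient f x, v⟫ ≤
        ‖gradient f (x + t • v) - gradient f x‖ * ‖v‖ := real_inner_le_norm _ _
    have h2 : ‖gradient f (x + t • v) - gradient f x‖ ≤ L * (t * ‖v‖) := by
      have := hlip.dist_le_mul (x + t • v) x
      rw [dist_eq_norm] at this
      have h3 : dist (x + t • v) x = t * ‖v‖ := by
        rw [dist_eq_norm]
        simp [norm_smul, abs_of_nonneg ht.1]
      rw [h3] at this
      simpa [Real.coe_toNNReal _ hL] using this
    have h4 : ⟪gradient f (x + t • v) - gradient f x, v⟫ ≤ L * t * ‖v‖ ^ 2 := by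
      calc _ ≤ ‖gradient f (x + t • v) - gradient f x‖ * ‖v‖ := h1
        _ ≤ L * (t * ‖v‖) * ‖v‖ := by
            apply mul_le_mul_of_nonneg_right h2 (norm_nonneg _)
        _ = L * t * ‖v‖ ^ 2 := by ring
    have := inner_sub_left (𝕜 := ℝ) (gradient f (x + t • v)) (gradient f x) v
    linarith [this ▸ h4]
  have hmono : ∫ t in (0:ℝ)..1, ⟪gradient f (x + t • v), v⟫ ≤
      ∫ t in (0:ℝ)..1, (⟪gradient f x, v⟫ + L * t * ‖v‖ ^ 2) := by
    apply intervalIntegral.integral_mono_on (by norm_num) (hφ'.intervalIntegrable 0 1)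
      ((by continuity : Continuous fun t : ℝ => ⟪gradient f x, v⟫ + L * t * ‖v‖ ^ 2).intervalIntegrable 0 1)
    intro t ht; exact hbound t ht
  have hrhs : ∫ t in (0:ℝ)..1, (⟪gradient f x, v⟫ + L * t * ‖v‖ ^ 2)
      = ⟪gradient f x, v⟫ + L / 2 * ‖v‖ ^ 2 := by
    rw [intervalIntegral.integral_add (intervalIntegrable_const)
      ((by continuity : Continuous fun t : ℝ => L * t * ‖v‖ ^ 2).intervalIntegrable 0 1)]
    simp only [intervalIntegral.integral_const, smul_eq_mul]
    have : ∫ t in (0:ℝ)..1, L * t * ‖v‖ ^ 2 = L / 2 * ‖v‖ ^ 2 := by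
      have : (fun t : ℝ => L * t * ‖v‖ ^ 2) = fun t : ℝ => (L * ‖v‖ ^ 2) * t := by
        funext t; ring
      rw [this, intervalIntegral.integral_const_mul, integral_id]
      ring
    rw [this]; ring
  linarith [hftc ▸ hrhs ▸ hmono]

lemma sgd_grad_sq (f : E → ℝ) (L : ℝ) (hL : 0 < L) (hf : ContDiff ℝ 2 f)
    (hf0 : ∀ x, 0 ≤ f x) (hHess : ∀ x, ‖fderiv ℝ (gradient f) x‖ ≤ L) (x : E) :
    ‖gradient f x‖ ^ 2 ≤ 2 * L * f x := by
  have h := sgd_descent f L hL.le hf hHess x (x - (1 / L) • gradient f x)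
  have h1 : (x - (1 / L) • gradient f x) - x = -((1 / L) • gradient f x) := by abel
  rw [h1] at h
  have h2 : ⟪gradient f x, -((1 / L) • gradient f x)⟫ = -(1 / L) * ‖gradient f x‖ ^ 2 := by
    rw [inner_neg_right, real_inner_smul_right, real_inner_self_eq_norm_sq]; ring
  have h3 : ‖-((1 / L) • gradient f x)‖ ^ 2 = (1 / L) ^ 2 * ‖gradient f x‖ ^ 2 := by
    rw [norm_neg, norm_smul]
    simp [abs_of_nonneg (by positivity : (0:ℝ) ≤ 1 / L), mul_pow]
  rw [h2, h3] at h
  have h0 := hf0 (x - (1 / L) • gradient f x)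
  have hLne : L ≠ 0 := hL.ne'
  have : f x - ‖gradient f x‖ ^ 2 / (2 * L) ≥ 0 := by
    have : -(1 / L) * ‖gradient f x‖ ^ 2 + L / 2 * ((1 / L) ^ 2 * ‖gradient f x‖ ^ 2)
        = -(‖gradient f x‖ ^ 2 / (2 * L)) := by field_simp; ring
    nlinarith [h0, h]
  have h2L : 0 < 2 * L := by positivity
  calc ‖gradient f x‖ ^ 2 = ‖gradient f x‖ ^ 2 / (2 * L) * (2 * L) := by field_simp
    _ ≤ f x * (2 * L) := by apply mul_le_mul_of_nonneg_right (by linarith) h2L.le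
    _ = 2 * L * f x := by ring

end Aux

lemma sgd_norm_sq_eq {d : ℕ} (x : EuclideanSpace ℝ (Fin d)) :
    ‖x‖ ^ 2 = ∑ i, x i * x i := by
  rw [← real_inner_self_eq_norm_sq, PiLp.inner_apply]
  simp [RCLike.inner_apply, sq]

lemma sgd_coord_sq_le {d : ℕ} (x : EuclideanSpace ℝ (Fin d)) (i : Fin d) :
    x i ^ 2 ≤ ‖x‖ ^ 2 := by
  rw [sgd_norm_sq_eq]
  have : x i ^ 2 = x i * x i := sq (x i) ▸ rfl
  rw [this]
  exact Finset.single_le_sum (f := fun j => x j * x j)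
    (fun j _ => mul_self_nonneg _) (Finset.mem_univ i)

lemma sgd_tower {Ω : Type*} {m : MeasurableSpace Ω} [m0 : MeasurableSpace Ω]
    (μ : Measure Ω) [IsProbabilityMeasure μ]
    (hm : m ≤ m0) {d : ℕ}
    (h g : Ω → EuclideanSpace ℝ (Fin d))
    (hh : StronglyMeasurable[m] h) (hhi : Integrable h μ)
    (hh2 : Integrable (fun ω => ‖h ω‖ ^ 2) μ)
    (hgi : Integrable g μ) (hg2 : Integrable (fun ω => ‖g ω‖ ^ 2) μ)
    (hcond : μ[g|m] =ᵐ[μ] h) :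
    ∫ ω, ⟪h ω, g ω⟫ ∂μ = ∫ ω, ‖h ω‖ ^ 2 ∂μ := by
  haveI : SigmaFinite (μ.trim hm) := inferInstance
  have hhm : ∀ i : Fin d, StronglyMeasurable[m] (fun ω => h ω i) := fun i =>
    (EuclideanSpace.proj (𝕜 := ℝ) i).continuous.comp_stronglyMeasurable hh
  have hprod_int : ∀ i : Fin d, Integrable (fun ω => h ω i * g ω i) μ := by
    intro i
    apply Integrable.mono' ((hh2.add hg2).div_const 2)
      (((hhm i).mono hm).aestronglyMeasurable.mul
        ((EuclideanSpace.proj (𝕜 := ℝ) i).continuous.comp_aestronglyMeasurable hgi.1))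
    filter_upwards with ω
    have h1 := sgd_coord_sq_le (h ω) i
    have h2 := sgd_coord_sq_le (g ω) i
    have h3 : |h ω i * g ω i| ≤ (h ω i ^ 2 + g ω i ^ 2) / 2 := by
      rw [abs_mul]
      nlinarith [abs_nonneg (h ω i), abs_nonneg (g ω i), sq_abs (h ω i), sq_abs (g ω i),
        sq_nonneg (|h ω i| - |g ω i|)]
    calc |h ω i * g ω i| ≤ (h ω i ^ 2 + g ω i ^ 2) / 2 := h3
      _ ≤ (‖h ω‖ ^ 2 + ‖g ω‖ ^ 2) / 2 := by linarith
  have hgi_coord : ∀ i : Fin d, Integrable (fun ω => g ω i) μ :=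
    fun i => (EuclideanSpace.proj (𝕜 := ℝ) i).integrable_comp hgi
  have hhi_coord : ∀ i : Fin d, Integrable (fun ω => h ω i) μ :=
    fun i => (EuclideanSpace.proj (𝕜 := ℝ) i).integrable_comp hhi
  -- coordinate of conditional expectation
  have hcond_coord : ∀ i : Fin d, (fun ω => h ω i) =ᵐ[μ] μ[fun ω => g ω i|m] := by
    intro i
    apply ae_eq_condExp_of_forall_setIntegral_eq hm (hgi_coord i)
      (fun s _ _ => (hhi_coord i).integrableOn)
    · intro s hs hμs
      have e1 : ∫ ω in s, g ω i ∂μ = (EuclideanSpace.proj (𝕜 := ℝ) i) (∫ ω in s, g ω ∂μ) := by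
        rw [← (EuclideanSpace.proj (𝕜 := ℝ) i).integral_comp_comm hgi.integrableOn]; rfl
      have e2 : ∫ ω in s, h ω i ∂μ = (EuclideanSpace.proj (𝕜 := ℝ) i) (∫ ω in s, h ω ∂μ) := by
        rw [← (EuclideanSpace.proj (𝕜 := ℝ) i).integral_comp_comm hhi.integrableOn]; rfl
      rw [e1, e2]
      congr 1
      calc ∫ ω in s, h ω ∂μ = ∫ ω in s, (μ[g|m]) ω ∂μ :=
            setIntegral_congr_ae (hm s hs) (hcond.symm.mono fun ω hω _ => hω)
        _ = ∫ ω in s, g ω ∂μ := setIntegral_condExp hm hgi hs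
    · exact (hhm i).aestronglyMeasurable
  have hhh_int : ∀ i : Fin d, Integrable (fun ω => h ω i * h ω i) μ := by
    intro i
    apply Integrable.mono' hh2 (((hhm i).mono hm).aestronglyMeasurable.mul
      ((hhm i).mono hm).aestronglyMeasurable)
    filter_upwards with ω
    have h1 := sgd_coord_sq_le (h ω) i
    calc |h ω i * h ω i| = h ω i ^ 2 := by rw [abs_mul_self]; ring
      _ ≤ ‖h ω‖ ^ 2 := h1
  have hcoord_eq : ∀ i : Fin d, ∫ ω, h ω i * g ω i ∂μ = ∫ ω, h ω i * h ω i ∂μ := by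
    intro i
    have step1 : ∫ ω, h ω i * g ω i ∂μ = ∫ ω, (μ[fun ω => h ω i * g ω i|m]) ω ∂μ :=
      (integral_condExp hm).symm
    have step2 : μ[fun ω => h ω i * g ω i|m] =ᵐ[μ]
        (fun ω => h ω i) * μ[fun ω => g ω i|m] :=
      condExp_mul_of_stronglyMeasurable_left (hhm i) (hprod_int i) (hgi_coord i)
    have step3 : ((fun ω => h ω i) * μ[fun ω => g ω i|m] : Ω → ℝ) =ᵐ[μ]
        fun ω => h ω i * h ω i := by
      filter_upwards [(hcond_coord i).symm] with ω hω
      simp [hω]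
    rw [step1]
    exact integral_congr_ae (step2.trans step3)
  have lhs_eq : ∫ ω, ⟪h ω, g ω⟫ ∂μ = ∑ i, ∫ ω, h ω i * g ω i ∂μ := by
    rw [← integral_finset_sum _ (fun i _ => hprod_int i)]
    apply integral_congr_ae
    filter_upwards with ω
    rw [PiLp.inner_apply]
    simp [RCLike.inner_apply]
    exact Finset.sum_congr rfl fun i _ => mul_comm _ _
  have rhs_eq : ∫ ω, ‖h ω‖ ^ 2 ∂μ = ∑ i, ∫ ω, h ω i * h ω i ∂μ := by
    rw [← integral_finset_sum _ (fun i _ => hhh_int i)]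
    apply integral_congr_ae
    filter_upwards with ω
    exact sgd_norm_sq_eq (h ω)
  rw [lhs_eq, rhs_eq]
  exact Finset.sum_congr rfl fun i _ => hcoord_eq i

lemma sgd_seq_conv (a c : ℕ → ℝ) (ha : ∀ m, 0 ≤ a m) (hc : ∀ m, 0 ≤ c m)
    (hsum : Summable c) (hstep : ∀ m, a (m + 1) ≤ a m + c m) :
    ∃ l, Tendsto a atTop (nhds l) := by
  set t : ℕ → ℝ := fun m => ∑' k, c (k + m) with ht
  have hts : ∀ m, Summable fun k => c (k + m) := fun m => (summable_nat_add_iff m).2 hsum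
  have htrec : ∀ m, t m = c m + t (m + 1) := by
    intro m
    have h0 := Summable.tsum_eq_zero_add (hts m)
    have h1 : c (0 + m) = c m := by norm_num
    have h2 : ∑' k, c (k + 1 + m) = t (m + 1) := by
      apply tsum_congr; intro k; congr 1; ring
    show (∑' k, c (k + m)) = _
    rw [h0, h1, h2]
  have htnn : ∀ m, 0 ≤ t m := fun m => tsum_nonneg fun k => hc _
  set b : ℕ → ℝ := fun m => a m + t m with hb
  have hbanti : Antitone b := by
    apply antitone_nat_of_succ_le
    intro m
    have h1 := hstep m
    have h2 := htrec m
    simp only [hb]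
    linarith
  have hbdd : BddBelow (Set.range b) := by
    refine ⟨0, fun x hx => ?_⟩
    obtain ⟨m, rfl⟩ := hx
    exact add_nonneg (ha m) (htnn m)
  have hbconv : Tendsto b atTop (nhds (⨅ m, b m)) := tendsto_atTop_ciInf hbanti hbdd
  have htzero : Tendsto t atTop (nhds 0) := by
    simpa [ht] using tendsto_sum_nat_add c
  refine ⟨⨅ m, b m, ?_⟩
  have : a = fun m => b m - t m := by funext m; simp [hb]
  rw [this]
  simpa using hbconv.sub htzero

/-- under the SGD setup with `∑ α_m = ∞`, `∑ α_m² < ∞`, `0 ≤ α_m ≤ 1/L`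
and `E[f(w_0)] < ∞` (sequences indexed from `0`), the sequence `E[f(w_m)]` converges as
`m → ∞` to its liminf; in particular it is a Cauchy sequence. -/
theorem stmt8 {d : ℕ} (f : EuclideanSpace ℝ (Fin d) → ℝ) (L σ : ℝ)
        (hf : ContDiff ℝ 2 f) (hf0 : ∀ x, 0 ≤ f x)
        (hHess : ∀ x, ‖fderiv ℝ (gradient f) x‖ ≤ L) (hL : 0 < L)
        {Ω : Type*} [inst : MeasurableSpace Ω] (μ : Measure Ω) [IsProbabilityMeasure μ]
        (𝓕 : ℕ → MeasurableSpace Ω) (h𝓕 : ∀ m, 𝓕 m ≤ inst)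
        (w g : ℕ → Ω → EuclideanSpace ℝ (Fin d)) (α : ℕ → ℝ)
        (hw : ∀ m, StronglyMeasurable[𝓕 m] (w m))
        (hg : ∀ m, AEStronglyMeasurable (g m) μ)
        (hiter : ∀ m, ∀ ω, w (m + 1) ω = w m ω - α m • g m ω)
        (hunbiased : ∀ m, μ[g m | 𝓕 m] =ᵐ[μ] fun ω => gradient f (w m ω))
        (hg2 : ∀ m, Integrable (fun ω => ‖g m ω‖ ^ 2) μ)
        (hvar : ∀ m, ∫ ω, (‖g m ω‖ ^ 2 - ‖gradient f (w m ω)‖ ^ 2) ∂μ ≤ σ ^ 2)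
        (hα : ∀ m, 0 ≤ α m) (hαL : ∀ m, α m ≤ 1 / L)
    (hdiv : Tendsto (fun M => ∑ m ∈ Finset.range M, α m) atTop atTop)
    (hsq : Summable (fun m => (α m) ^ 2))
    (hint : Integrable (fun ω => f (w 0 ω)) μ) :
    Tendsto (fun m => ∫ ω, f (w m ω) ∂μ) atTop
        (nhds (liminf (fun m => ∫ ω, f (w m ω) ∂μ) atTop)) ∧
      CauchySeq (fun m => ∫ ω, f (w m ω) ∂μ) := by
  have hcont : Continuous f := hf.continuous
  have hgradcont : Continuous (gradient f) := (sgd_grad_lip f L hf hHess).continuous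
  set H : ℕ → Ω → EuclideanSpace ℝ (Fin d) := fun m ω => gradient f (w m ω) with hH
  have HmSM : ∀ m, StronglyMeasurable[𝓕 m] (H m) :=
    fun m => hgradcont.comp_stronglyMeasurable (hw m)
  have fwASM : ∀ m, AEStronglyMeasurable (fun ω => f (w m ω)) μ := fun m =>
    ((hcont.comp_stronglyMeasurable (hw m)).mono (h𝓕 m)).aestronglyMeasurable
  have Hasm : ∀ m, AEStronglyMeasurable (H m) μ := fun m =>
    ((HmSM m).mono (h𝓕 m)).aestronglyMeasurable
  set I : ℕ → ℝ := fun m => ∫ ω, f (w m ω) ∂μ with hI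
  set c : ℕ → ℝ := fun m => L / 2 * σ ^ 2 * α m ^ 2 with hc
  -- main induction step
  have main : ∀ m, Integrable (fun ω => f (w m ω)) μ →
      Integrable (fun ω => f (w (m+1) ω)) μ ∧ I (m+1) ≤ I m + c m := by
    intro m If
    have IH2 : Integrable (fun ω => ‖H m ω‖ ^ 2) μ := by
      apply Integrable.mono' (If.const_mul (2 * L))
        (((Hasm m).norm.aemeasurable.pow_const 2).aestronglyMeasurable)
      filter_upwards with ω
      rw [Real.norm_eq_abs, abs_of_nonneg (by positivity)]
      exact sgd_grad_sq f L hL hf hf0 hHess (w m ω)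
    have Ig : Integrable (g m) μ := by
      apply Integrable.mono' (((integrable_const (1:ℝ)).add (hg2 m)).div_const 2) (hg m)
      filter_upwards with ω
      have := sq_nonneg (‖g m ω‖ - 1)
      simp only [Pi.add_apply]
      nlinarith [norm_nonneg (g m ω)]
    have IHm : Integrable (H m) μ := by
      apply Integrable.mono' (((integrable_const (1:ℝ)).add IH2).div_const 2) (Hasm m)
      filter_upwards with ω
      have := sq_nonneg (‖H m ω‖ - 1)
      simp only [Pi.add_apply]
      nlinarith [norm_nonneg (H m ω)]
    have Icross : Integrable (fun ω => ⟪H m ω, g m ω⟫) μ := by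
      apply Integrable.mono' ((IH2.add (hg2 m)).div_const 2) ((Hasm m).inner (hg m))
      filter_upwards with ω
      simp only [Pi.add_apply, Real.norm_eq_abs]
      have h1 := abs_real_inner_le_norm (H m ω) (g m ω)
      nlinarith [sq_nonneg (‖H m ω‖ - ‖g m ω‖), norm_nonneg (H m ω), norm_nonneg (g m ω)]
    have pointwise : ∀ ω, f (w (m+1) ω) ≤
        f (w m ω) - α m * ⟪H m ω, g m ω⟫ + L / 2 * (α m ^ 2 * ‖g m ω‖ ^ 2) := by
      intro ω
      have hd := sgd_descent f L hL.le hf hHess (w m ω) (w (m+1) ω)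
      have hsub : w (m+1) ω - w m ω = -(α m • g m ω) := by rw [hiter m ω]; abel
      rw [hsub] at hd
      have h2 : ⟪gradient f (w m ω), -(α m • g m ω)⟫ = -(α m * ⟪H m ω, g m ω⟫) := by
        rw [inner_neg_right, real_inner_smul_right]
      have h3 : ‖-(α m • g m ω)‖ ^ 2 = α m ^ 2 * ‖g m ω‖ ^ 2 := by
        rw [norm_neg, norm_smul]
        simp [abs_of_nonneg (hα m), mul_pow]
      rw [h2, h3] at hd
      linarith
    have Ifs : Integrable (fun ω => f (w (m+1) ω)) μ := by
      apply Integrable.mono'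
        (If.add ((Icross.abs.const_mul (α m)).add ((hg2 m).const_mul (L / 2 * α m ^ 2))))
        (fwASM (m+1))
      filter_upwards with ω
      simp only [Pi.add_apply]
      rw [Real.norm_eq_abs, abs_of_nonneg (hf0 _)]
      have hp := pointwise ω
      have h4 : -(α m * ⟪H m ω, g m ω⟫) ≤ α m * |⟪H m ω, g m ω⟫| := by
        rw [neg_le]
        have := neg_abs_le (⟪H m ω, g m ω⟫)
        nlinarith [hα m, abs_nonneg (⟪H m ω, g m ω⟫)]
      calc f (w (m+1) ω) ≤ f (w m ω) - α m * ⟪H m ω, g m ω⟫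
            + L / 2 * (α m ^ 2 * ‖g m ω‖ ^ 2) := hp
        _ ≤ f (w m ω) + (α m * |⟪H m ω, g m ω⟫| + L / 2 * α m ^ 2 * ‖g m ω‖ ^ 2) := by
            nlinarith [hp, h4]
    refine ⟨Ifs, ?_⟩
    have tower : ∫ ω, ⟪H m ω, g m ω⟫ ∂μ = ∫ ω, ‖H m ω‖ ^ 2 ∂μ :=
      sgd_tower μ (h𝓕 m) (H m) (g m) (HmSM m) IHm IH2 Ig (hg2 m) (hunbiased m)
    have hA : 0 ≤ ∫ ω, ‖H m ω‖ ^ 2 ∂μ := integral_nonneg fun ω => by positivity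
    have hvar' : ∫ ω, ‖g m ω‖ ^ 2 ∂μ ≤ σ ^ 2 + ∫ ω, ‖H m ω‖ ^ 2 ∂μ := by
      have := hvar m
      rw [integral_sub (hg2 m) IH2] at this
      linarith
    have hIneq : I (m+1) ≤ I m - α m * ∫ ω, ‖H m ω‖ ^ 2 ∂μ
        + L / 2 * α m ^ 2 * ∫ ω, ‖g m ω‖ ^ 2 ∂μ := by
      have h5 : I (m+1) ≤ ∫ ω, (f (w m ω) - α m * ⟪H m ω, g m ω⟫
          + L / 2 * (α m ^ 2 * ‖g m ω‖ ^ 2)) ∂μ := by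
        apply integral_mono Ifs _ pointwise
        exact (If.sub (Icross.const_mul (α m))).add (((hg2 m).const_mul (α m ^ 2)).const_mul (L/2))
      have i1 : Integrable (fun ω => f (w m ω) - α m * ⟪H m ω, g m ω⟫) μ :=
        If.sub (Icross.const_mul (α m))
      have i2 : Integrable (fun ω => L / 2 * (α m ^ 2 * ‖g m ω‖ ^ 2)) μ :=
        ((hg2 m).const_mul (α m ^ 2)).const_mul (L / 2)
      have i3 : Integrable (fun ω => α m * ⟪H m ω, g m ω⟫) μ := Icross.const_mul (α m)
      rw [integral_add i1 i2, integral_sub If i3,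
          integral_const_mul, integral_const_mul, integral_const_mul, tower] at h5
      simp only [hI]
      nlinarith [h5]
    have hLα : L * α m ≤ 1 := by
      have := hαL m
      rw [le_div_iff₀ hL] at this
      linarith
    have hgbound : L / 2 * α m ^ 2 * ∫ ω, ‖g m ω‖ ^ 2 ∂μ ≤
        L / 2 * α m ^ 2 * (σ ^ 2 + ∫ ω, ‖H m ω‖ ^ 2 ∂μ) := by
      apply mul_le_mul_of_nonneg_left hvar' (by positivity)
    have hcoef : (L / 2 * α m ^ 2 - α m) * ∫ ω, ‖H m ω‖ ^ 2 ∂μ ≤ 0 := by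
      apply mul_nonpos_of_nonpos_of_nonneg _ hA
      nlinarith [hα m, hLα]
    simp only [hc]
    nlinarith [hIneq, hgbound, hcoef]
  have Int : ∀ m, Integrable (fun ω => f (w m ω)) μ := by
    intro m
    induction m with
    | zero => exact hint
    | succ k ih => exact (main k ih).1
  have hstep : ∀ m, I (m+1) ≤ I m + c m := fun m => (main m (Int m)).2
  have hInn : ∀ m, 0 ≤ I m := fun m => integral_nonneg fun ω => hf0 _
  have hcnn : ∀ m, 0 ≤ c m := fun m => by positivity
  have hcsum : Summable c := by
    have := hsq.mul_left (L / 2 * σ ^ 2)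
    simpa [hc, mul_assoc] using this
  obtain ⟨l, hl⟩ := sgd_seq_conv I c hInn hcnn hcsum hstep
  have hliminf : liminf I atTop = l := hl.liminf_eq
  exact ⟨hliminf ▸ hl, hl.cauchySeq⟩
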